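/- In golden games (Bernoulli parameter p = φ) the starting player wins with probability exactly the golden ratio: for every n ∈ ℕ, μ_{2n,φ}({a : V_{2n}(a) = true}) = φ and μ_{2n+1,φ}({a : V_{2n+1}(a) = false}) = φ. -/

import Mathlib

open Filter Topology

/-- The golden ratio `φ = (√5 − 1)/2`. -/
noncomputable def phi : ℝ := (Real.sqrt 5 - 1) / 2

/-- Backward-induction value of the win-lose game of depth `n` on the complete binary tree:
`V_0(a) = a 0`; for `n ≥ 1`, the value is the `AND` of the values of the two depth-`(n−1)`
subtrees if `n` is odd (Player 2, the minimizer, moves) and the `OR` if `n` is even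
(Player 1, the maximizer, moves).  Player 2 moves last. -/
def gameValue : (n : ℕ) → (Fin (2 ^ n) → Bool) → Bool
  | 0, a => a 0
  | n + 1, a =>
      have h : 2 ^ (n + 1) = 2 ^ n + 2 ^ n := by rw [pow_succ]; omega
      let aL : Fin (2 ^ n) → Bool := fun i => a ⟨i.1, by have := i.2; omega⟩
      let aR : Fin (2 ^ n) → Bool := fun i => a ⟨i.1 + 2 ^ n, by have := i.2; omega⟩
      if (n + 1) % 2 = 1 then gameValue n aL && gameValue n aR
      else gameValue n aL || gameValue n aR

/-- `μ_{n,p}(S)`: the probability of a set `S` of depth-`n` games when the `2^n` payoffs are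
i.i.d. Bernoulli, each `true` with probability `p`. -/
noncomputable def prob (n : ℕ) (p : ℝ) (S : Set (Fin (2 ^ n) → Bool)) : ℝ :=
  ∑ a : Fin (2 ^ n) → Bool, S.indicator (fun a => ∏ i, if a i then p else 1 - p) a

/-!
Let `q n` be the probability that the player moving at the root of a depth-`n` game wins.
That player loses exactly when both subgames are won by the player moving at their roots,
i.e. by the opponent; the two subgames are independent, so `q (n + 1) = 1 - q n ^ 2`, while
`q 0 = p`. Since `φ ^ 2 = 1 - φ`, the value `p = φ` is a fixed point of this recursion, hence
`q n = φ` for all `n`.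
-/

def leftHalf (n : ℕ) (a : Fin (2 ^ (n + 1)) → Bool) : Fin (2 ^ n) → Bool :=
  fun i => a ⟨i.1, by have := i.2; have := Nat.two_pow_succ n; omega⟩

def rightHalf (n : ℕ) (a : Fin (2 ^ (n + 1)) → Bool) : Fin (2 ^ n) → Bool :=
  fun i => a ⟨i.1 + 2 ^ n, by have := i.2; have := Nat.two_pow_succ n; omega⟩

lemma gameValue_succ (n : ℕ) (a : Fin (2 ^ (n + 1)) → Bool) :
    gameValue (n + 1) a =
      if (n + 1) % 2 = 1 then gameValue n (leftHalf n a) && gameValue n (rightHalf n a)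
      else gameValue n (leftHalf n a) || gameValue n (rightHalf n a) := rfl

def halvesEquiv (n : ℕ) :
    (Fin (2 ^ (n + 1)) → Bool) ≃ (Fin (2 ^ n) → Bool) × (Fin (2 ^ n) → Bool) :=
  (((finCongr (Nat.two_pow_succ n)).trans finSumFinEquiv.symm).arrowCongr
    (Equiv.refl Bool)).trans (Equiv.sumArrowEquivProdArrow _ _ _)

lemma halvesEquiv_apply (n : ℕ) (a : Fin (2 ^ (n + 1)) → Bool) :
    halvesEquiv n a = (leftHalf n a, rightHalf n a) := by
  ext i <;> simp [halvesEquiv, leftHalf, rightHalf, Fin.cast, Fin.addNat]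

noncomputable def bernoulliWeight {ι : Type*} [Fintype ι] (p : ℝ) (a : ι → Bool) : ℝ :=
  ∏ i, if a i then p else 1 - p

lemma sum_bernoulliWeight {ι : Type*} [Fintype ι] [DecidableEq ι] (p : ℝ) :
    ∑ a : ι → Bool, bernoulliWeight p a = 1 := by
  calc ∑ a : ι → Bool, bernoulliWeight p a
        = ∏ _ : ι, ∑ b : Bool, if b then p else 1 - p := by rw [Fintype.prod_sum]; rfl
    _ = 1 := by simp

lemma prob_eq_sum_indicator (n : ℕ) (p : ℝ) (S : Set (Fin (2 ^ n) → Bool)) :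
    prob n p S = ∑ a, S.indicator (bernoulliWeight p) a := rfl

lemma bernoulliWeight_halves (n : ℕ) (p : ℝ) (a : Fin (2 ^ (n + 1)) → Bool) :
    bernoulliWeight p a =
      bernoulliWeight p (leftHalf n a) * bernoulliWeight p (rightHalf n a) := by
  rw [bernoulliWeight, ← (finCongr (Nat.two_pow_succ n)).symm.prod_comp, Fin.prod_univ_add]
  congr 1
  refine Fintype.prod_congr _ _ fun i => ?_
  rw [finCongr_symm, finCongr_apply, Fin.natAdd_eq_addNat]
  rfl

lemma prob_halves_mem (n : ℕ) (p : ℝ) (S T : Set (Fin (2 ^ n) → Bool)) :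
    prob (n + 1) p {a | leftHalf n a ∈ S ∧ rightHalf n a ∈ T} = prob n p S * prob n p T := by
  rw [prob_eq_sum_indicator, prob_eq_sum_indicator, prob_eq_sum_indicator, Fintype.sum_mul_sum,
    ← Fintype.sum_prod_type', ← (halvesEquiv n).sum_comp]
  refine Fintype.sum_congr _ _ fun a => ?_
  classical
  simp only [halvesEquiv_apply, Set.indicator_apply, Set.mem_ofPred_eq, ite_zero_mul_ite_zero,
    ← bernoulliWeight_halves]

lemma prob_univ (n : ℕ) (p : ℝ) : prob n p Set.univ = 1 := by
  rw [prob_eq_sum_indicator, Set.indicator_univ, sum_bernoulliWeight]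

lemma prob_compl (n : ℕ) (p : ℝ) (S : Set (Fin (2 ^ n) → Bool)) :
    prob n p Sᶜ = 1 - prob n p S := by
  rw [← prob_univ n p, eq_sub_iff_add_eq, prob_eq_sum_indicator, prob_eq_sum_indicator,
    prob_eq_sum_indicator, ← Finset.sum_add_distrib]
  simp

/-- The root of a depth-`n` game has height `n`, so the starting player is Player 1 exactly when
`n` is even. -/
def startingPlayerWins (n : ℕ) : Set (Fin (2 ^ n) → Bool) :=
  {a | gameValue n a = decide (n % 2 = 0)}

lemma startingPlayerWins_succ_compl (n : ℕ) :
    (startingPlayerWins (n + 1))ᶜ =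
      {a | leftHalf n a ∈ startingPlayerWins n ∧ rightHalf n a ∈ startingPlayerWins n} := by
  ext a
  rcases Nat.mod_two_eq_zero_or_one n with h | h <;>
    simp [startingPlayerWins, gameValue_succ, Nat.add_mod, h]

lemma prob_startingPlayerWins_succ (n : ℕ) (p : ℝ) :
    prob (n + 1) p (startingPlayerWins (n + 1)) = 1 - prob n p (startingPlayerWins n) ^ 2 := by
  rw [← compl_compl (startingPlayerWins (n + 1)), prob_compl, startingPlayerWins_succ_compl,
    prob_halves_mem, sq]

lemma prob_startingPlayerWins_zero (p : ℝ) : prob 0 p (startingPlayerWins 0) = p := by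
  change ∑ a : Fin 1 → Bool, (startingPlayerWins 0).indicator (bernoulliWeight p) a = p
  rw [← (Equiv.funUnique (Fin 1) Bool).symm.sum_comp, Fintype.sum_bool]
  simp [startingPlayerWins, gameValue, bernoulliWeight, Set.indicator_apply, uniqueElim]

lemma phi_sq : phi ^ 2 = 1 - phi := by
  have h : Real.sqrt 5 ^ 2 = 5 := Real.sq_sqrt (by norm_num)
  unfold phi
  linear_combination h / 4

lemma prob_startingPlayerWins_phi (n : ℕ) : prob n phi (startingPlayerWins n) = phi := by
  induction n with
  | zero => exact prob_startingPlayerWins_zero phi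
  | succ n ih => rw [prob_startingPlayerWins_succ, ih, phi_sq, sub_sub_cancel]

/-- In golden games the starting player wins with probability exactly `φ`: for every `n`,
`μ_{2n,φ}({V_{2n} = true}) = φ` and `μ_{2n+1,φ}({V_{2n+1} = false}) = φ`. -/
theorem golden_game_starting_player_wins (n : ℕ) :
    prob (2 * n) phi {a | gameValue (2 * n) a = true} = phi ∧
    prob (2 * n + 1) phi {a | gameValue (2 * n + 1) a = false} = phi := by
  constructor
  · simpa [startingPlayerWins] using prob_startingPlayerWins_phi (2 * n)
  · simpa [startingPlayerWins, Nat.add_mod] using prob_startingPlayerWins_phi (2 * n + 1)
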